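/- Let p be a single forbidden pattern of length m ≥ 1 over {−1, 0, +1} and let D = {p}. Then cap(D) = 0 if and only if p contains at least m−1 consecutive zeros (i.e., the word of m−1 zeros occurs as a contiguous subword of p). -/

import Mathlib

/-- The integer value of a binary symbol. -/
def boolToInt (b : Bool) : ℤ := if b then 1 else 0

/-- Componentwise difference of two binary words, a word over `{-1, 0, +1}`. -/
def diffWord (u v : List Bool) : List ℤ :=
  List.zipWith (fun a b => boolToInt a - boolToInt b) u v

/-- A forbidden pattern: a nonempty finite word over the alphabet `{-1, 0, +1}`. -/
def IsPattern (p : List ℤ) : Prop :=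
  p ≠ [] ∧ ∀ x ∈ p, x = -1 ∨ x = 0 ∨ x = 1

/-- A code `C` of binary words avoids the forbidden set `D` if no difference of two
distinct code words contains a pattern of `D` as a contiguous subword (factor). -/
def AvoidsCode (D : Finset (List ℤ)) (C : Finset (List Bool)) : Prop :=
  ∀ u ∈ C, ∀ v ∈ C, u ≠ v → ∀ p ∈ D, ¬ p <:+: diffWord u v

/-- `delta D n` : the maximal cardinality of a code of binary words of length `n`
avoiding the forbidden set `D`. -/
noncomputable def delta (D : Finset (List ℤ)) (n : ℕ) : ℕ :=
  sSup {k : ℕ | ∃ C : Finset (List Bool),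
    (∀ u ∈ C, u.length = n) ∧ AvoidsCode D C ∧ C.card = k}

/-- The capacity of a set of forbidden difference patterns. -/
noncomputable def cap (D : Finset (List ℤ)) : ℝ :=
  Filter.limsup (fun n : ℕ => Real.logb 2 (delta D n) / n) Filter.atTop

/-!
If `p = 0^(m-1) x`, two distinct codewords of an avoiding code already differ among their first
`m` letters: otherwise their difference word starts with at least `m` zeros followed by `±1` at
the first difference, so it contains `0^m` and, up to swapping the two words, `0^(m-1) x`.
Hence `δ_n ≤ 2^m`; the pattern `x 0^(m-1)` reduces to this one by reversing all words.

Otherwise `p` has two nonzero letters at some distance `d`, or a single nonzero letter flanked by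
zeros. In the first case, the words vanishing on the even blocks of length `d` and constant on
the odd ones avoid `p`, since two letters at distance `d` lie in consecutive blocks; in the second,
the words constant on each pair `{2i, 2i+1}` avoid `p`, since their differences are constant on
these pairs too. Both codes have exponential size, so the capacity is positive.
-/

lemma diffWord_cons (a b : Bool) (u v : List Bool) :
    diffWord (a :: u) (b :: v) = (boolToInt a - boolToInt b) :: diffWord u v := rfl

lemma diffWord_self (u : List Bool) : diffWord u u = List.replicate u.length 0 := by
  simp [diffWord, List.zipWith_self, boolToInt, List.map_const']

lemma diffWord_append {s s' : List Bool} (h : s.length = s'.length) (t t' : List Bool) :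
    diffWord (s ++ t) (s' ++ t') = diffWord s s' ++ diffWord t t' :=
  List.zipWith_append h

lemma diffWord_reverse {u v : List Bool} (h : u.length = v.length) :
    diffWord u.reverse v.reverse = (diffWord u v).reverse :=
  (List.reverse_zipWith h).symm

lemma diffWord_ofFn (n : ℕ) (f g : ℕ → Bool) :
    diffWord (List.ofFn fun i : Fin n => f i) (List.ofFn fun i : Fin n => g i) =
      List.ofFn fun i : Fin n => boolToInt (f i) - boolToInt (g i) := by
  apply List.ext_getElem <;> simp [diffWord]

lemma List.exists_eq_append_cons_of_ne {α : Type*} {u v : List α} (hlen : u.length = v.length)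
    (hne : u ≠ v) : ∃ s a b u' v', a ≠ b ∧ u = s ++ a :: u' ∧ v = s ++ b :: v' := by
  induction u generalizing v with
  | nil => cases v <;> simp_all
  | cons a u ih =>
    obtain _ | ⟨b, v⟩ := v
    · simp at hlen
    by_cases hab : a = b
    · subst hab
      obtain ⟨s, c, d, u', v', hcd, rfl, rfl⟩ := ih (by simpa using hlen) (by simpa using hne)
      exact ⟨a :: s, c, d, u', v', hcd, rfl, rfl⟩
    · exact ⟨[], a, b, u, v, hab, rfl, rfl⟩

lemma List.replicate_append_singleton_infix {α : Type*} {k n : ℕ} (h : k ≤ n) (c x : α)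
    (l : List α) :
    List.replicate k c ++ [x] <:+: List.replicate n c ++ x :: l := by
  obtain ⟨r, rfl⟩ := Nat.exists_eq_add_of_le h
  rw [Nat.add_comm, ← List.replicate_append_replicate]
  simpa only [List.append_assoc, List.cons_append, List.nil_append] using
    List.infix_append (List.replicate r c) (List.replicate k c ++ [x]) l

lemma infix_diffWord_of_getElem?_eq {k : ℕ} {u v : List Bool} (hlen : u.length = v.length)
    (hne : u ≠ v) (hagree : ∀ i ≤ k, u[i]? = v[i]?) {x : ℤ} (hx : x = -1 ∨ x = 0 ∨ x = 1) :
    List.replicate k 0 ++ [x] <:+: diffWord u v ∨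
      List.replicate k 0 ++ [x] <:+: diffWord v u := by
  obtain ⟨s, a, b, u', v', hab, rfl, rfl⟩ := List.exists_eq_append_cons_of_ne hlen hne
  have hk : k < s.length := by
    by_contra! hk
    simpa [hab] using hagree s.length hk
  rw [diffWord_append rfl, diffWord_append rfl, diffWord_self, diffWord_cons, diffWord_cons]
  have hzero : ∀ (e : ℤ) l,
      List.replicate k 0 ++ [0] <:+: List.replicate s.length 0 ++ e :: l := by
    intro e l
    obtain ⟨r, hr⟩ := Nat.exists_eq_add_of_lt hk
    rw [hr, List.replicate_succ', List.append_assoc, List.singleton_append]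
    exact List.replicate_append_singleton_infix (by omega) 0 0 _
  have hsign := List.replicate_append_singleton_infix hk.le (0 : ℤ)
  rcases hx with rfl | rfl | rfl <;> cases a <;> cases b <;> simp_all [boolToInt]

lemma card_le_two_pow_of_length_eq {C : Finset (List Bool)} {n : ℕ}
    (hC : ∀ u ∈ C, u.length = n) : C.card ≤ 2 ^ n := by
  calc C.card ≤ (Finset.univ : Finset (Fin n → Bool)).card := by
        refine Finset.card_le_card_of_injOn (fun u i => u.getD i false) (by simp) ?_
        intro u hu v hv huv
        refine List.ext_getElem (by rw [hC u hu, hC v hv]) fun i hiu hiv => ?_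
        simpa [List.getD_eq_getElem, hiu, hiv] using congrFun huv ⟨i, hC u hu ▸ hiu⟩
    _ = 2 ^ n := by simp

lemma card_le_of_avoidsCode_replicate_append {k n : ℕ} {x : ℤ} (hx : x = -1 ∨ x = 0 ∨ x = 1)
    {C : Finset (List Bool)} (hC : ∀ u ∈ C, u.length = n)
    (hav : AvoidsCode {List.replicate k 0 ++ [x]} C) : C.card ≤ 2 ^ (k + 1) := by
  have hinj : Set.InjOn (List.take (k + 1)) (C : Set (List Bool)) := by
    intro u hu v hv huv
    by_contra hne
    have hagree : ∀ i ≤ k, u[i]? = v[i]? := fun i hi => by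
      simpa [List.getElem?_take, Nat.lt_succ_of_le hi] using congrArg (·[i]?) huv
    rcases infix_diffWord_of_getElem?_eq (by rw [hC u hu, hC v hv]) hne hagree hx with h | h
    · exact hav u hu v hv hne _ (Finset.mem_singleton_self _) h
    · exact hav v hv u hu (Ne.symm hne) _ (Finset.mem_singleton_self _) h
  calc C.card = (C.image (List.take (k + 1))).card := (Finset.card_image_of_injOn hinj).symm
    _ ≤ 2 ^ min (k + 1) n := card_le_two_pow_of_length_eq (by simp +contextual [hC])
    _ ≤ 2 ^ (k + 1) := Nat.pow_le_pow_right two_pos (min_le_left _ _)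

lemma AvoidsCode.image_reverse {p : List ℤ} {C : Finset (List Bool)} {n : ℕ}
    (hC : ∀ u ∈ C, u.length = n) (hav : AvoidsCode {p} C) :
    AvoidsCode {p.reverse} (C.image List.reverse) := by
  simp only [AvoidsCode, Finset.mem_image, Finset.mem_singleton, forall_eq,
    forall_exists_index, and_imp]
  rintro _ u hu rfl _ v hv rfl hne
  rw [diffWord_reverse (by rw [hC u hu, hC v hv]), List.reverse_infix]
  exact hav u hu v hv (fun h => hne (h ▸ rfl)) p (Finset.mem_singleton_self p)

lemma delta_bddAbove (D : Finset (List ℤ)) (n : ℕ) :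
    BddAbove {k : ℕ | ∃ C : Finset (List Bool),
      (∀ u ∈ C, u.length = n) ∧ AvoidsCode D C ∧ C.card = k} :=
  ⟨2 ^ n, fun _ ⟨_, hC, _, hk⟩ => hk ▸ card_le_two_pow_of_length_eq hC⟩

lemma card_le_delta {D : Finset (List ℤ)} {n : ℕ} {C : Finset (List Bool)}
    (hC : ∀ u ∈ C, u.length = n) (hav : AvoidsCode D C) : C.card ≤ delta D n :=
  le_csSup (delta_bddAbove D n) ⟨C, hC, hav, rfl⟩

lemma delta_le {D : Finset (List ℤ)} {n K : ℕ}
    (h : ∀ C : Finset (List Bool), (∀ u ∈ C, u.length = n) → AvoidsCode D C → C.card ≤ K) :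
    delta D n ≤ K :=
  csSup_le ⟨0, ∅, by simp, by simp [AvoidsCode], rfl⟩ fun _ ⟨C, hC, hav, hk⟩ => hk ▸ h C hC hav

lemma one_le_delta (D : Finset (List ℤ)) (n : ℕ) : 1 ≤ delta D n :=
  card_le_delta (C := {List.replicate n false}) (by simp)
    (by simp +contextual [AvoidsCode])

lemma delta_le_two_pow (D : Finset (List ℤ)) (n : ℕ) : delta D n ≤ 2 ^ n :=
  delta_le fun _ hC _ => card_le_two_pow_of_length_eq hC

lemma delta_replicate_append_le {x : ℤ} (hx : x = -1 ∨ x = 0 ∨ x = 1) (k n : ℕ) :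
    delta {List.replicate k 0 ++ [x]} n ≤ 2 ^ (k + 1) :=
  delta_le fun _ hC hav => card_le_of_avoidsCode_replicate_append hx hC hav

lemma delta_cons_replicate_le {x : ℤ} (hx : x = -1 ∨ x = 0 ∨ x = 1) (k n : ℕ) :
    delta {x :: List.replicate k 0} n ≤ 2 ^ (k + 1) := by
  refine delta_le fun C hC hav => ?_
  have hav' := hav.image_reverse hC
  rw [List.reverse_cons, List.reverse_replicate] at hav'
  rw [← Finset.card_image_of_injective C List.reverse_injective]
  exact card_le_of_avoidsCode_replicate_append hx (n := n) (by simp +contextual [hC]) hav'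

lemma cap_eq_zero_of_delta_le {D : Finset (List ℤ)} (K : ℕ) (h : ∀ n, delta D n ≤ K) :
    cap D = 0 := by
  have hpos : ∀ n, (0 : ℝ) < delta D n := fun n => by exact_mod_cast one_le_delta D n
  refine Filter.Tendsto.limsup_eq <| tendsto_of_tendsto_of_tendsto_of_le_of_le
    tendsto_const_nhds (tendsto_const_div_atTop_nhds_zero_nat (Real.logb 2 K))
    (fun n => ?_) (fun n => ?_)
  · exact div_nonneg (Real.logb_nonneg one_lt_two (by exact_mod_cast one_le_delta D n))
      n.cast_nonneg
  · exact div_le_div_of_nonneg_right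
      (Real.logb_le_logb_of_le one_lt_two (hpos n) (by exact_mod_cast h n)) n.cast_nonneg

lemma cap_pos_of_two_pow_le_delta {D : Finset (List ℤ)} {M : ℕ} (hM : 0 < M)
    (h : ∀ n, 2 ^ (n / M) ≤ delta D n) : 0 < cap D := by
  have hpos : ∀ n, (0 : ℝ) < delta D n := fun n => by exact_mod_cast one_le_delta D n
  have hbdd : Filter.IsBoundedUnder (· ≤ ·) Filter.atTop
      (fun n : ℕ => Real.logb 2 (delta D n) / n) := by
    refine Filter.isBoundedUnder_of ⟨1, fun n => div_le_one_of_le₀ ?_ n.cast_nonneg⟩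
    rw [Real.logb_le_iff_le_rpow one_lt_two (hpos n), Real.rpow_natCast]
    exact_mod_cast delta_le_two_pow D n
  have hfreq : ∀ᶠ n : ℕ in Filter.atTop,
      1 / (2 * M : ℝ) ≤ Real.logb 2 (delta D n) / n := by
    filter_upwards [Filter.eventually_ge_atTop M] with n hn
    have hn2 : n ≤ 2 * M * (n / M) := by
      have := Nat.lt_div_mul_add (a := n) hM
      have := (Nat.one_le_div_iff hM).2 hn
      nlinarith
    have hlog : ((n / M : ℕ) : ℝ) ≤ Real.logb 2 (delta D n) := by
      rw [Real.le_logb_iff_rpow_le one_lt_two (hpos n), Real.rpow_natCast]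
      exact_mod_cast h n
    rw [div_le_div_iff₀ (by positivity) (by exact_mod_cast (hM.trans_le hn))]
    have : (n : ℝ) ≤ 2 * M * (n / M : ℕ) := by exact_mod_cast hn2
    nlinarith
  exact (by positivity : (0 : ℝ) < 1 / (2 * M)).trans_le
    (Filter.le_limsup_of_frequently_le hfreq.frequently hbdd)

lemma two_pow_le_delta_of_code {p : List ℤ} {n q : ℕ} (w : Finset ℕ → ℕ → Bool)
    (hdecode : ∀ k < q, ∃ i < n, ∀ s, w s i = decide (k ∈ s))
    (havoid : ∀ s s' t, t + p.length ≤ n →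
      ¬ ∀ j (hj : j < p.length), boolToInt (w s (j + t)) - boolToInt (w s' (j + t)) = p[j]) :
    2 ^ q ≤ delta {p} n := by
  set word : Finset ℕ → List Bool := fun s => List.ofFn fun i : Fin n => w s i
  have hinj : Set.InjOn word ((Finset.range q).powerset : Set (Finset ℕ)) := by
    intro s hs s' hs' hss'
    ext k
    by_cases hk : k < q
    · obtain ⟨i, hi, hw⟩ := hdecode k hk
      simpa [word, hi, hw] using congrArg (·[i]?) hss'
    · simp only [Finset.coe_powerset, Set.mem_preimage, Set.mem_powerset_iff,
        Finset.coe_subset] at hs hs'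
      exact iff_of_false (fun h => hk (Finset.mem_range.1 (hs h)))
        (fun h => hk (Finset.mem_range.1 (hs' h)))
  have hav : AvoidsCode {p} ((Finset.range q).powerset.image word) := by
    simp only [AvoidsCode, Finset.mem_image, Finset.mem_singleton, forall_eq,
      forall_exists_index, and_imp]
    rintro _ s - rfl _ s' - rfl - hp
    obtain ⟨t, ht, hmatch⟩ := List.infix_iff_getElem?.1 hp
    simp only [word, diffWord_ofFn, List.length_ofFn] at ht hmatch
    refine havoid s s' t (by omega) fun j hj => ?_
    simpa [List.getElem?_ofFn, show j + t < n by omega] using hmatch j hj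
  calc 2 ^ q = ((Finset.range q).powerset.image word).card := by
        rw [Finset.card_image_of_injOn hinj, Finset.card_powerset, Finset.card_range]
    _ ≤ delta {p} n := card_le_delta (by simp [word]) hav

lemma two_pow_le_delta_of_two_ne_zero {p : List ℤ} {a b : ℕ} (hab : a < b) (hb : b < p.length)
    (hpa : p[a] ≠ 0) (hpb : p[b] ≠ 0) (n : ℕ) :
    2 ^ (n / (2 * (b - a))) ≤ delta {p} n := by
  set d := b - a
  have hd : 0 < d := by omega
  refine two_pow_le_delta_of_code (fun s i => decide ((i / d) % 2 = 1 ∧ i / (2 * d) ∈ s))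
    (fun k hk => ⟨2 * d * k + d, ?_, fun s => ?_⟩) fun s s' t ht hmatch => ?_
  · have := (Nat.le_div_iff_mul_le (by omega)).1 hk
    nlinarith
  · have h₁ : (2 * d * k + d) / d = 2 * k + 1 := by
      rw [show 2 * d * k + d = (2 * k + 1) * d by ring, Nat.mul_div_cancel _ hd]
    have h₂ : (2 * d * k + d) / (2 * d) = k := by
      rw [Nat.mul_add_div (by omega), Nat.div_eq_of_lt (by omega), Nat.add_zero]
    simp [h₁, h₂]
  · have hzero : ∀ j (hj : j < p.length), (j + t) / d % 2 = 0 → p[j] = 0 :=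
      fun j hj hj₀ => by simp [← hmatch j hj, hj₀, boolToInt]
    have hshift : (b + t) / d = (a + t) / d + 1 := by
      rw [show b + t = a + t + d by omega, Nat.add_div_right _ hd]
    rcases Nat.mod_two_eq_zero_or_one ((a + t) / d) with h | h
    · exact hpa (hzero a (by omega) h)
    · exact hpb (hzero b hb (by omega))

lemma two_pow_le_delta_of_isolated {p : List ℤ} {a : ℕ} (ha : a + 2 < p.length)
    (hpa : p[a] = 0) (hpa₁ : p[a + 1] ≠ 0) (hpa₂ : p[a + 2] = 0) (n : ℕ) :
    2 ^ (n / 2) ≤ delta {p} n := by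
  refine two_pow_le_delta_of_code (fun s i => decide (i / 2 ∈ s))
    (fun k hk => ⟨2 * k, by omega, fun s => by simp⟩) fun s s' t ht hmatch => ?_
  have hpair : ∀ j (hj : j + 1 < p.length), (j + t) % 2 = 0 → p[j] = p[j + 1] :=
    fun j hj hj₀ => by
      rw [← hmatch j (by omega), ← hmatch (j + 1) hj,
        show (j + 1 + t) / 2 = (j + t) / 2 by omega]
  rcases Nat.mod_two_eq_zero_or_one (a + t) with h | h
  · exact hpa₁ (hpa ▸ hpair a (by omega) h).symm
  · exact hpa₁ (hpa₂ ▸ hpair (a + 1) ha (by omega))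

lemma List.IsInfix.eq_append_singleton_or_eq_cons {α : Type*} {l₁ l₂ : List α}
    (h : l₁ <:+: l₂) (hlen : l₂.length = l₁.length + 1) :
    ∃ x, l₂ = l₁ ++ [x] ∨ l₂ = x :: l₁ := by
  obtain ⟨s, t, rfl⟩ := h
  match s, t, hlen with
  | [], [x], _ => exact ⟨x, Or.inl rfl⟩
  | [x], [], _ => exact ⟨x, Or.inr (by simp)⟩
  | [], [], h | _ :: _ :: _, _, h | _ :: _, _ :: _, h | [], _ :: _ :: _, h =>
    simp at h <;> omega

lemma exists_two_ne_zero_or_isolated {p : List ℤ}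
    (h : ¬ List.replicate (p.length - 1) 0 <:+: p) :
    (∃ a b, ∃ (_ : a < b) (_ : b < p.length), p[a] ≠ 0 ∧ p[b] ≠ 0) ∨
      ∃ a, ∃ _ : a + 2 < p.length, p[a] = 0 ∧ p[a + 1] ≠ 0 ∧ p[a + 2] = 0 := by
  by_contra! hp
  obtain ⟨hpair, hisol⟩ := hp
  obtain hnil | hpos := p.length.eq_zero_or_pos
  · simp [List.length_eq_zero_iff.1 hnil] at h
  by_cases h₀ : p[0] = 0
  · have hzero : ∀ j (hj : j + 1 < p.length), p[j] = 0 := by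
      intro j
      induction j with
      | zero => exact fun _ => h₀
      | succ j ih =>
        intro hj
        by_contra hj₁
        exact hisol j hj (ih (by omega)) hj₁ (hpair (j + 1) (j + 2) (by omega) hj hj₁)
    have htake : p.take (p.length - 1) = List.replicate (p.length - 1) 0 := by
      refine List.eq_replicate_iff.2 ⟨by simp, fun y hy => ?_⟩
      obtain ⟨j, hj, rfl⟩ := List.getElem_of_mem hy
      simp only [List.length_take] at hj
      simpa using hzero j (by omega)
    exact h (htake ▸ (p.take_prefix _).isInfix)
  · have hdrop : p.drop 1 = List.replicate (p.length - 1) 0 := by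
      refine List.eq_replicate_iff.2 ⟨by simp, fun y hy => ?_⟩
      obtain ⟨j, hj, rfl⟩ := List.getElem_of_mem hy
      simp only [List.length_drop] at hj
      simpa [Nat.add_comm 1] using hpair 0 (j + 1) (by omega) (by omega) h₀
    exact h (hdrop ▸ (p.drop_suffix 1).isInfix)

theorem singleton_zero_capacity_iff_general (m : ℕ) (p : List ℤ)
    (hp : IsPattern p) (hlen : p.length = m) :
    cap {p} = 0 ↔ List.replicate (m - 1) (0:ℤ) <:+: p := by
  constructor
  · intro hcap
    by_contra hzeros
    rcases exists_two_ne_zero_or_isolated (hlen ▸ hzeros) with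
      ⟨a, b, hab, hb, hpa, hpb⟩ | ⟨a, ha, hpa, hpa₁, hpa₂⟩
    · exact (cap_pos_of_two_pow_le_delta (by omega)
        (two_pow_le_delta_of_two_ne_zero hab hb hpa hpb)).ne' hcap
    · exact (cap_pos_of_two_pow_le_delta two_pos
        (two_pow_le_delta_of_isolated ha hpa hpa₁ hpa₂)).ne' hcap
  · intro hzeros
    have hm : 0 < m := hlen ▸ List.length_pos_of_ne_nil hp.1
    obtain ⟨x, rfl | rfl⟩ :=
      hzeros.eq_append_singleton_or_eq_cons (by rw [hlen, List.length_replicate]; omega)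
    · exact cap_eq_zero_of_delta_le _ (delta_replicate_append_le (hp.2 x (by simp)) _)
    · exact cap_eq_zero_of_delta_le _ (delta_cons_replicate_le (hp.2 x (by simp)) _)

/-- for a single pattern `p` of length `m`, `cap({p}) = 0` iff `p`
contains at least `m-1` consecutive zeros. -/
theorem singleton_zero_capacity_iff (m : ℕ) (hm : 1 ≤ m) (p : List ℤ)
    (hp : IsPattern p) (hlen : p.length = m) :
    cap {p} = 0 ↔ List.replicate (m - 1) (0:ℤ) <:+: p :=
  singleton_zero_capacity_iff_general m p hp hlen
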